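/- arXiv:1908.09645 — 4 statements merged into one kernel-verified Lean document; each statement's English description precedes it below -/
import Mathlib

section
/- The algebra A = k[x,y]/(xy, x^k - y^l) with k,l ≥ 1 is a symmetric algebra: there exists a k-linear functional φ : A → k whose kernel contains no nonzero ideal of A (equivalently, the bilinear form (a,b) ↦ φ(ab) is nondegenerate and symmetric). -/
/-! Write `x, y` for the images of the variables in `A`. From `xy = 0` and `x^k = y^l` one gets
`x^(k+1) = y^(l+1) = 0`, so `A` is spanned by `1, x, …, x^k, y, …, y^(l-1)`. The functional `φ`
reading off the coefficient of the socle element `x^k = y^l` pairs this family with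
`x^k, …, x, 1, y^(l-1), …, y`, and every `a` has the expansion
`a = ∑ φ(a x^(k-i)) x^i + ∑ φ(a y^(l-j)) y^j`. So if `φ(ab) = 0` for all `b`, then
`a = 0`. -/

open MvPolynomial

theorem pow_mul_pow_eq_zero_of_mul_eq_zero {M : Type*} [CommMonoidWithZero M] {x y : M}
    (hxy : x * y = 0) {i j : ℕ} (hi : i ≠ 0) (hj : j ≠ 0) : x ^ i * y ^ j = 0 := by
  obtain ⟨i, rfl⟩ := Nat.exists_eq_succ_of_ne_zero hi
  obtain ⟨j, rfl⟩ := Nat.exists_eq_succ_of_ne_zero hj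
  rw [pow_succ, pow_succ', mul_assoc, ← mul_assoc x, hxy, zero_mul, mul_zero]

theorem Finset.sum_ite_add_tsub_eq_smul {M R : Type*} [AddCommMonoid M] [Semiring R] [Module R M]
    (f : ℕ → M) {m n : ℕ} (s : Finset ℕ) (hs : ∀ i ∈ s, i ≤ n) :
    ∑ i ∈ s, (if m + (n - i) = n then (1 : R) else 0) • f i = if m ∈ s then f m else 0 := by
  rw [← Finset.sum_ite_eq' s m f]
  refine Finset.sum_congr rfl fun i hi => ?_
  have := hs i hi
  by_cases h : i = m <;> simp [h] <;> omega

section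

variable {K A : Type*} [CommSemiring K] [CommSemiring A] [Algebra K A]

structure IsSocleFunctional (φ : A →ₗ[K] K) (x y : A) (k l : ℕ) : Prop where
  mul_eq_zero : x * y = 0
  pow_eq_pow : x ^ k = y ^ l
  ne_zero_left : k ≠ 0
  ne_zero_right : l ≠ 0
  apply_pow_left : ∀ n, φ (x ^ n) = if n = k then 1 else 0
  apply_pow_right : ∀ n, φ (y ^ n) = if n = l then 1 else 0

def dualExpansion (φ : A →ₗ[K] K) (x y : A) (k l : ℕ) (a : A) : A :=
  ∑ i ∈ Finset.range (k + 1), φ (a * x ^ (k - i)) • x ^ i +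
    ∑ j ∈ Finset.Ico 1 l, φ (a * y ^ (l - j)) • y ^ j

namespace IsSocleFunctional

variable {x y : A} {k l : ℕ} {φ : A →ₗ[K] K} (h : IsSocleFunctional φ x y k l)
include h

theorem pow_left_eq_zero {m : ℕ} (hm : k < m) : x ^ m = 0 := by
  refine pow_eq_zero_of_le hm ?_
  rw [pow_succ', h.pow_eq_pow]
  exact pow_one x ▸ pow_mul_pow_eq_zero_of_mul_eq_zero h.mul_eq_zero one_ne_zero h.ne_zero_right

theorem pow_right_eq_zero {m : ℕ} (hm : l < m) : y ^ m = 0 := by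
  refine pow_eq_zero_of_le hm ?_
  rw [pow_succ, ← h.pow_eq_pow]
  exact pow_one y ▸ pow_mul_pow_eq_zero_of_mul_eq_zero h.mul_eq_zero h.ne_zero_left one_ne_zero

theorem dualExpansion_pow_left (m : ℕ) : dualExpansion φ x y k l (x ^ m) = x ^ m := by
  have hx : ∑ i ∈ Finset.range (k + 1), φ (x ^ m * x ^ (k - i)) • x ^ i
      = if m ∈ Finset.range (k + 1) then x ^ m else 0 := by
    simp_rw [← pow_add, h.apply_pow_left]
    exact Finset.sum_ite_add_tsub_eq_smul _ _ fun i hi => Nat.le_of_lt_succ (Finset.mem_range.1 hi)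
  have hy : ∑ j ∈ Finset.Ico 1 l, φ (x ^ m * y ^ (l - j)) • y ^ j = 0 := by
    refine Finset.sum_eq_zero fun j hj => ?_
    rw [Finset.mem_Ico] at hj
    rcases eq_or_ne m 0 with rfl | hm
    · rw [pow_zero, one_mul, h.apply_pow_right, if_neg (by omega), zero_smul]
    · rw [pow_mul_pow_eq_zero_of_mul_eq_zero h.mul_eq_zero hm (by omega), map_zero, zero_smul]
  rw [dualExpansion, hx, hy, add_zero]
  split_ifs with hm
  · rfl
  · exact (h.pow_left_eq_zero (by simpa using hm)).symm

theorem dualExpansion_pow_right {m : ℕ} (hm : m ≠ 0) :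
    dualExpansion φ x y k l (y ^ m) = y ^ m := by
  have hx : ∑ i ∈ Finset.range (k + 1), φ (y ^ m * x ^ (k - i)) • x ^ i
      = if m = l then x ^ k else 0 := by
    have hlow : ∑ i ∈ Finset.range k, φ (y ^ m * x ^ (k - i)) • x ^ i = 0 := by
      refine Finset.sum_eq_zero fun i hi => ?_
      rw [Finset.mem_range] at hi
      rw [mul_comm, pow_mul_pow_eq_zero_of_mul_eq_zero h.mul_eq_zero (by omega) hm, map_zero,
        zero_smul]
    rw [Finset.sum_range_succ, hlow, zero_add, Nat.sub_self, pow_zero, mul_one,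
      h.apply_pow_right, ite_smul, one_smul, zero_smul]
  have hy : ∑ j ∈ Finset.Ico 1 l, φ (y ^ m * y ^ (l - j)) • y ^ j
      = if m ∈ Finset.Ico 1 l then y ^ m else 0 := by
    simp_rw [← pow_add, h.apply_pow_right]
    exact Finset.sum_ite_add_tsub_eq_smul _ _ fun j hj => (Finset.mem_Ico.1 hj).2.le
  rw [dualExpansion, hx, hy]
  simp only [Finset.mem_Ico]
  rcases lt_trichotomy m l with hml | rfl | hml
  · rw [if_neg hml.ne, if_pos ⟨by omega, hml⟩, zero_add]
  · rw [if_pos rfl, if_neg (by omega), add_zero, h.pow_eq_pow]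
  · rw [if_neg hml.ne', if_neg (by omega), add_zero, h.pow_right_eq_zero hml]

theorem dualExpansion_eq_self (hgen : Algebra.adjoin K {x, y} = ⊤) (a : A) :
    dualExpansion φ x y k l a = a := by
  have ha : a ∈ Submodule.span K (Submonoid.closure {x, y} : Set A) := by
    rw [← Algebra.adjoin_eq_span, hgen]
    trivial
  induction ha using Submodule.span_induction with
  | mem s hs =>
    obtain ⟨m, n, rfl⟩ := (Submonoid.mem_closure_pair x y s).1 hs
    rcases eq_or_ne n 0 with rfl | hn
    · rw [pow_zero, mul_one, h.dualExpansion_pow_left]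
    rcases eq_or_ne m 0 with rfl | hm
    · rw [pow_zero, one_mul, h.dualExpansion_pow_right hn]
    rw [pow_mul_pow_eq_zero_of_mul_eq_zero h.mul_eq_zero hm hn]
    simp [dualExpansion]
  | zero => simp [dualExpansion]
  | add a b _ _ ha hb =>
    conv_rhs => rw [← ha, ← hb]
    simp only [dualExpansion, add_mul, map_add, add_smul, Finset.sum_add_distrib]
    abel
  | smul c a _ ha =>
    conv_rhs => rw [← ha]
    simp only [dualExpansion, smul_mul_assoc, map_smul, smul_eq_mul, mul_smul, Finset.smul_sum,
      smul_add]

theorem eq_zero_of_forall_apply_mul_eq_zero (hgen : Algebra.adjoin K {x, y} = ⊤) {a : A}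
    (ha : ∀ b, φ (a * b) = 0) : a = 0 := by
  rw [← h.dualExpansion_eq_self hgen a]
  simp [dualExpansion, ha]

end IsSocleFunctional

end

theorem Ideal.exists_linearMap_quotient_mk_eq {K R M : Type*} [CommRing K] [CommRing R]
    [Algebra K R] [AddCommGroup M] [Module K M] (I : Ideal R) (f : R →ₗ[K] M)
    (hf : ∀ p ∈ I, f p = 0) :
    ∃ g : R ⧸ I →ₗ[K] M, ∀ p, g (Ideal.Quotient.mk I p) = f p :=
  ⟨(Submodule.liftQ (I.restrictScalars K) f hf).comp
      (Submodule.Quotient.restrictScalarsEquiv K I).symm.toLinearMap, fun _ => rfl⟩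

/-- On representatives, the coefficient of the socle element `x^k = y^l` of the quotient is the
sum of the coefficients of `x^k` and of `y^l`. -/
noncomputable def socleCoeff (K : Type*) [CommRing K] (k l : ℕ) :
    MvPolynomial (Fin 2) K →ₗ[K] K :=
  lcoeff K (Finsupp.single 0 k) + lcoeff K (Finsupp.single 1 l)

section

variable {K : Type*} [CommRing K] {k l : ℕ}

local notation "𝓘" => Ideal.span {(X 0 * X 1 : MvPolynomial (Fin 2) K), X 0 ^ k - X 1 ^ l}

theorem socleCoeff_X_zero_pow (hl : l ≠ 0) (n : ℕ) :
    socleCoeff K k l (X 0 ^ n) = if n = k then 1 else 0 := by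
  simp [socleCoeff, coeff_X_pow, (Finsupp.single_injective _).eq_iff,
    Finsupp.single_eq_single_iff, hl]

theorem socleCoeff_X_one_pow (hk : k ≠ 0) (n : ℕ) :
    socleCoeff K k l (X 1 ^ n) = if n = l then 1 else 0 := by
  simp [socleCoeff, coeff_X_pow, (Finsupp.single_injective _).eq_iff,
    Finsupp.single_eq_single_iff, hk]

theorem socleCoeff_eq_zero_of_mem (hk : k ≠ 0) (hl : l ≠ 0) {p : MvPolynomial (Fin 2) K}
    (hp : p ∈ 𝓘) : socleCoeff K k l p = 0 := by
  obtain ⟨u, v, rfl⟩ := Ideal.mem_span_pair.1 hp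
  -- no monomial of `u * (x * y)` is a pure power, and `v * (x^k - y^l)` has the coefficients
  -- `v₀` and `-v₀` at `x^k` and `y^l`
  simp [socleCoeff, mul_sub, X_pow_eq_monomial, coeff_mul_monomial', ← mul_assoc, coeff_mul_X',
    hk, hl]

theorem adjoin_mk_X_eq_top :
    Algebra.adjoin K {Ideal.Quotient.mk 𝓘 (X 0), Ideal.Quotient.mk 𝓘 (X 1)} = ⊤ := by
  rw [eq_top_iff]
  rintro a -
  obtain ⟨p, rfl⟩ := Ideal.Quotient.mk_surjective a
  induction p using MvPolynomial.induction_on with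
  | C c => exact Subalgebra.algebraMap_mem _ c
  | add p q hp hq =>
    rw [map_add]
    exact add_mem hp hq
  | mul_X p n hp =>
    rw [map_mul]
    exact mul_mem hp (Algebra.subset_adjoin (by fin_cases n <;> simp))

theorem isSocleFunctional_quotient (hk : k ≠ 0) (hl : l ≠ 0)
    {φ : MvPolynomial (Fin 2) K ⧸ 𝓘 →ₗ[K] K}
    (hφ : ∀ p, φ (Ideal.Quotient.mk 𝓘 p) = socleCoeff K k l p) :
    IsSocleFunctional φ (Ideal.Quotient.mk 𝓘 (X 0)) (Ideal.Quotient.mk 𝓘 (X 1)) k l where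
  mul_eq_zero := by
    rw [← map_mul, Ideal.Quotient.eq_zero_iff_mem]
    exact Ideal.subset_span (by simp)
  pow_eq_pow := by
    rw [← map_pow, ← map_pow, Ideal.Quotient.eq]
    exact Ideal.subset_span (by simp)
  ne_zero_left := hk
  ne_zero_right := hl
  apply_pow_left n := by rw [← map_pow, hφ, socleCoeff_X_zero_pow hl]
  apply_pow_right n := by rw [← map_pow, hφ, socleCoeff_X_one_pow hk]

end

/-- `A = k[x,y]/(xy, x^k - y^l)` with `k, l ≥ 1` is a symmetric algebra: there is a linear
functional `φ : A → k` such that the (automatically symmetric, associative) bilinear form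
`(a, b) ↦ φ (a * b)` is nondegenerate; equivalently `ker φ` contains no nonzero ideal. -/
theorem stmt_2 (K : Type*) [Field K] (k l : ℕ) (hk : 1 ≤ k) (hl : 1 ≤ l) :
    ∃ φ : (MvPolynomial (Fin 2) K ⧸
        Ideal.span {(X 0 * X 1 : MvPolynomial (Fin 2) K), X 0 ^ k - X 1 ^ l}) →ₗ[K] K,
      (∀ a b, φ (a * b) = φ (b * a)) ∧
      (∀ a, a ≠ 0 → ∃ b, φ (a * b) ≠ 0) := by
  obtain ⟨φ, hφ⟩ := Ideal.exists_linearMap_quotient_mk_eq _ (socleCoeff K k l)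
    fun _ hp => socleCoeff_eq_zero_of_mem (by omega) (by omega) hp
  refine ⟨φ, fun a b => congrArg φ (mul_comm a b), fun a ha => ?_⟩
  by_contra! h
  have hsocle := isSocleFunctional_quotient (by omega) (by omega) hφ
  exact ha (hsocle.eq_zero_of_forall_apply_mul_eq_zero adjoin_mk_X_eq_top h)
end

section
/- If char(k) ≠ 2 then the algebra A₍t₎ = k⟨α,β⟩/(J³, α² - β², αβ - tα², βα - tβ²) with t² = 1 (where J is the ideal generated by α,β) is not a symmetric algebra; in fact the element α - tβ lies in the socle of A₍t₎ but not in the two-sided socle relations, contradicting symmetry. Concretely: in A₍t₎ the element α - tβ satisfies (α - tβ)·J = J·(α - tβ) = 0 while α - tβ ∉ J². -/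
/-! `s = a - t • b` and `a * a` annihilate the generators `a, b` on the right, and `s` also on
the left. Since `a, b` generate the algebra, `x * A ⊆ K ∙ x` for such `x`, so `s` kills
`J = (a, b)` on both sides, and a nondegenerate form `φ` cannot vanish on such a nonzero `x`:
`φ` is injective on the right annihilator of `J`. That space contains `s` and `a * a`, which are
linearly independent: `a ↦ ε, b ↦ 0` into the dual numbers kills `J²` but not `s`, and
`a ↦ N, b ↦ t • N` with `N` the nilpotent 3 × 3 shift keeps `a * a ≠ 0`. -/

open scoped Pointwise

/-- Relations defining `A_t = k⟨α,β⟩/(J³, α² - β², αβ - tα², βα - tβ²)`, where `α, β` are the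
two generators of the free algebra and `J = (α, β)`; killing all products of three generators
kills `J³`. -/
inductive AtRel (K : Type*) [Field K] (t : K) :
    FreeAlgebra K (Fin 2) → FreeAlgebra K (Fin 2) → Prop
  | sq : AtRel K t (FreeAlgebra.ι K 0 * FreeAlgebra.ι K 0)
      (FreeAlgebra.ι K 1 * FreeAlgebra.ι K 1)
  | ab : AtRel K t (FreeAlgebra.ι K 0 * FreeAlgebra.ι K 1)
      (t • (FreeAlgebra.ι K 0 * FreeAlgebra.ι K 0))
  | ba : AtRel K t (FreeAlgebra.ι K 1 * FreeAlgebra.ι K 0)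
      (t • (FreeAlgebra.ι K 1 * FreeAlgebra.ι K 1))
  | cube (i j l : Fin 2) :
      AtRel K t (FreeAlgebra.ι K i * FreeAlgebra.ι K j * FreeAlgebra.ι K l) 0

section Socle

variable {K A : Type*} [CommRing K] [Ring A] [Algebra K A] {s : Set A}

theorem mul_mem_span_singleton_right_of_adjoin_eq_top (hs : Algebra.adjoin K s = ⊤) {x : A}
    (hx : ∀ g ∈ s, x * g = 0) (y : A) : x * y ∈ K ∙ x := by
  induction (hs ▸ Algebra.mem_top : y ∈ Algebra.adjoin K s) using Algebra.adjoin_induction with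
  | mem g hg => simp [hx g hg]
  | algebraMap r =>
    rw [Algebra.algebraMap_eq_smul_one, mul_smul_comm, mul_one]
    exact Submodule.smul_mem _ _ (Submodule.mem_span_singleton_self x)
  | add y z _ _ hy hz => rw [mul_add]; exact add_mem hy hz
  | mul y z _ _ hy hz =>
    obtain ⟨c, hc⟩ := Submodule.mem_span_singleton.mp hy
    rw [← mul_assoc, ← hc, smul_mul_assoc]
    exact Submodule.smul_mem _ _ hz

theorem mul_mem_span_singleton_left_of_adjoin_eq_top (hs : Algebra.adjoin K s = ⊤) {x : A}
    (hx : ∀ g ∈ s, g * x = 0) (y : A) : y * x ∈ K ∙ x := by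
  induction (hs ▸ Algebra.mem_top : y ∈ Algebra.adjoin K s) using Algebra.adjoin_induction with
  | mem g hg => simp [hx g hg]
  | algebraMap r =>
    rw [Algebra.algebraMap_eq_smul_one, smul_mul_assoc, one_mul]
    exact Submodule.smul_mem _ _ (Submodule.mem_span_singleton_self x)
  | add y z _ _ hy hz => rw [add_mul]; exact add_mem hy hz
  | mul y z _ _ hy hz =>
    obtain ⟨c, hc⟩ := Submodule.mem_span_singleton.mp hz
    rw [mul_assoc, ← hc, mul_smul_comm]
    exact Submodule.smul_mem _ _ hy

theorem forall_mem_twoSidedIdeal_span_mul_eq_zero (hs : Algebra.adjoin K s = ⊤) {x : A}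
    (hx : ∀ g ∈ s, x * g = 0 ∧ g * x = 0) :
    ∀ j ∈ TwoSidedIdeal.span s, x * j = 0 ∧ j * x = 0 := by
  intro j hj
  induction hj using TwoSidedIdeal.span_induction with
  | mem g hg => exact hx g hg
  | zero => simp
  | add y z _ _ hy hz => simp [mul_add, add_mul, hy, hz]
  | neg y _ hy => simp [hy]
  | left_absorb y z _ hz =>
    obtain ⟨c, hc⟩ := Submodule.mem_span_singleton.mp
      (mul_mem_span_singleton_right_of_adjoin_eq_top hs (fun g hg => (hx g hg).1) y)
    rw [← mul_assoc, ← hc, smul_mul_assoc, hz.1, mul_assoc, hz.2]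
    simp
  | right_absorb y z _ hz =>
    obtain ⟨c, hc⟩ := Submodule.mem_span_singleton.mp
      (mul_mem_span_singleton_left_of_adjoin_eq_top hs (fun g hg => (hx g hg).2) y)
    rw [mul_assoc, ← hc, mul_smul_comm, hz.2, ← mul_assoc, hz.1]
    simp

theorem LinearMap.apply_ne_zero_of_mul_mem_span_singleton (φ : A →ₗ[K] K)
    (hφ : ∀ x : A, x ≠ 0 → ∃ y, φ (x * y) ≠ 0) {x : A} (hx : ∀ y, x * y ∈ K ∙ x)
    (hx0 : x ≠ 0) : φ x ≠ 0 := by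
  intro hφx
  obtain ⟨y, hy⟩ := hφ x hx0
  obtain ⟨c, hc⟩ := Submodule.mem_span_singleton.mp (hx y)
  rw [← hc, map_smul, hφx, smul_zero] at hy
  exact hy rfl

end Socle

theorem mem_span_singleton_of_mul_eq_zero_of_nondegenerate {K A : Type*} [Field K] [Ring A]
    [Algebra K A] {s : Set A} (hs : Algebra.adjoin K s = ⊤) (φ : A →ₗ[K] K)
    (hφ : ∀ x : A, x ≠ 0 → ∃ y, φ (x * y) ≠ 0) {u v : A} (hu : ∀ g ∈ s, u * g = 0)
    (hv : ∀ g ∈ s, v * g = 0) (hu0 : u ≠ 0) : v ∈ K ∙ u := by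
  have hφu := φ.apply_ne_zero_of_mul_mem_span_singleton hφ
    (mul_mem_span_singleton_right_of_adjoin_eq_top hs hu) hu0
  have hw : φ u • v - φ v • u = 0 := by
    by_contra hw
    refine φ.apply_ne_zero_of_mul_mem_span_singleton hφ
      (mul_mem_span_singleton_right_of_adjoin_eq_top hs fun g hg => ?_) hw ?_
    · simp [sub_mul, hu g hg, hv g hg]
    · simp [mul_comm]
  refine Submodule.mem_span_singleton.mpr ⟨(φ u)⁻¹ * φ v, ?_⟩
  rw [sub_eq_zero] at hw
  rw [mul_smul, ← hw, smul_smul, inv_mul_cancel₀ hφu, one_smul]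

namespace AtRel

variable {K : Type*} [Field K] {t : K} {A : Type*} [Ring A] [Algebra K A]
  (e : RingQuot (AtRel K t) ≃ₐ[K] A) {a b : A}
  (ha : a = e (RingQuot.mkAlgHom K (AtRel K t) (FreeAlgebra.ι K 0)))
  (hb : b = e (RingQuot.mkAlgHom K (AtRel K t) (FreeAlgebra.ι K 1)))
include ha hb

theorem b_mul_b : b * b = a * a := by
  subst ha hb
  simpa only [map_mul] using congrArg e (RingQuot.mkAlgHom_rel K AtRel.sq).symm

theorem a_mul_b : a * b = t • (a * a) := by
  subst ha hb
  simpa only [map_mul, map_smul] using congrArg e (RingQuot.mkAlgHom_rel K AtRel.ab)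

theorem b_mul_a : b * a = t • (a * a) := by
  rw [← b_mul_b e ha hb]
  subst ha hb
  simpa only [map_mul, map_smul] using congrArg e (RingQuot.mkAlgHom_rel K AtRel.ba)

omit hb in
theorem a_mul_a_mul_a : a * a * a = 0 := by
  subst ha
  simpa only [map_mul, map_zero] using congrArg e (RingQuot.mkAlgHom_rel K (AtRel.cube 0 0 0))

theorem adjoin_eq_top : Algebra.adjoin K {a, b} = ⊤ := by
  set F := e.toAlgHom.comp (RingQuot.mkAlgHom K (AtRel K t))
  have hF : ({a, b} : Set A) = F '' Set.range (FreeAlgebra.ι K) := by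
    ext
    simp [← Set.range_comp, Fin.exists_fin_two, F, ha, hb, eq_comm]
  rw [hF, Algebra.adjoin_image, FreeAlgebra.adjoin_range_ι, Algebra.map_top,
    AlgHom.range_eq_top]
  exact e.surjective.comp (RingQuot.mkAlgHom_surjective K _)

theorem exists_algHom {B : Type*} [Ring B] [Algebra K B] (f : Fin 2 → B)
    (hsq : f 0 * f 0 = f 1 * f 1) (hab : f 0 * f 1 = t • (f 0 * f 0))
    (hba : f 1 * f 0 = t • (f 1 * f 1)) (hcube : ∀ i j l, f i * f j * f l = 0) :
    ∃ Φ : A →ₐ[K] B, Φ a = f 0 ∧ Φ b = f 1 := by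
  refine ⟨(RingQuot.liftAlgHom K ⟨FreeAlgebra.lift K f, ?_⟩).comp e.symm.toAlgHom, ?_, ?_⟩
  · rintro _ _ (_ | _ | _ | ⟨i, j, l⟩) <;> simp [hsq, hab, hba, hcube]
  all_goals subst ha hb; simp

theorem mul_self_mul_eq_zero : ∀ g ∈ ({a, b} : Set A), a * a * g = 0 := by
  have haaa := a_mul_a_mul_a e ha
  simp only [Set.mem_insert_iff, Set.mem_singleton_iff, forall_eq_or_imp, forall_eq]
  refine ⟨haaa, ?_⟩
  rw [mul_assoc, a_mul_b e ha hb, mul_smul_comm, ← mul_assoc, haaa, smul_zero]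

theorem sub_smul_mul_eq_zero (ht : t ^ 2 = 1) :
    ∀ g ∈ ({a, b} : Set A), (a - t • b) * g = 0 ∧ g * (a - t • b) = 0 := by
  have htt : t * t = 1 := by rw [← pow_two, ht]
  simp only [Set.mem_insert_iff, Set.mem_singleton_iff, forall_eq_or_imp, forall_eq]
  simp [sub_mul, mul_sub, a_mul_b e ha hb, b_mul_a e ha hb, b_mul_b e ha hb, smul_smul, htt]

theorem mul_self_ne_zero (ht : t ^ 2 = 1) : a * a ≠ 0 := by
  set N : Matrix (Fin 3) (Fin 3) K := Matrix.single 1 0 1 + Matrix.single 2 1 1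
  have hN2 : N * N = Matrix.single 2 0 1 := by simp [N, add_mul, mul_add]
  have hN3 : N * N * N = 0 := by simp [hN2, N, mul_add]
  have htt : t * t = 1 := by rw [← pow_two, ht]
  obtain ⟨Φ, hΦa, -⟩ := exists_algHom e ha hb ![N, t • N]
    (by simp [smul_smul, htt]) (by simp) (by simp [smul_smul, htt])
    (by intro i j l; fin_cases i <;> fin_cases j <;> fin_cases l <;> simp [hN3])
  intro haa
  have h := congrArg (fun x => Φ x 2 0) haa
  simp [hΦa, hN2] at h

theorem sub_smul_notMem_span : a - t • b ∉ Submodule.span K {a * a, a * b, b * a, b * b} := by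
  obtain ⟨Φ, hΦa, hΦb⟩ := exists_algHom e ha hb (![DualNumber.eps, 0] : Fin 2 → DualNumber K)
    (by simp [DualNumber.eps_mul_eps]) (by simp [DualNumber.eps_mul_eps]) (by simp)
    (by intro i j l; fin_cases i <;> fin_cases j <;> fin_cases l <;> simp [DualNumber.eps_mul_eps])
  intro hmem
  have hker : a - t • b ∈ LinearMap.ker Φ.toLinearMap := by
    refine Submodule.span_le.mpr ?_ hmem
    simp [Set.insert_subset_iff, hΦa, hΦb, DualNumber.eps_mul_eps]
  simpa [hΦa, hΦb] using congrArg TrivSqZeroExt.snd (LinearMap.mem_ker.mp hker)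

end AtRel

theorem stmt_4_general (K : Type*) [Field K] (t : K) (ht : t ^ 2 = 1)
    (A : Type*) [Ring A] [Algebra K A] (e : RingQuot (AtRel K t) ≃ₐ[K] A)
    (a b : A) (ha : a = e (RingQuot.mkAlgHom K (AtRel K t) (FreeAlgebra.ι K 0)))
    (hb : b = e (RingQuot.mkAlgHom K (AtRel K t) (FreeAlgebra.ι K 1))) :
    (∀ x ∈ TwoSidedIdeal.span ({a, b} : Set A), (a - t • b) * x = 0 ∧ x * (a - t • b) = 0) ∧
    (a - t • b) ∉ Submodule.span K ({a * a, a * b, b * a, b * b} : Set A) ∧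
    ¬ ∃ φ : A →ₗ[K] K, (∀ x y : A, φ (x * y) = φ (y * x)) ∧
        (∀ x : A, x ≠ 0 → ∃ y, φ (x * y) ≠ 0) := by
  have hgen := AtRel.adjoin_eq_top e ha hb
  have hsocle := AtRel.sub_smul_mul_eq_zero e ha hb ht
  have hnotMem := AtRel.sub_smul_notMem_span e ha hb
  refine ⟨forall_mem_twoSidedIdeal_span_mul_eq_zero hgen hsocle, hnotMem, ?_⟩
  rintro ⟨φ, -, hφ⟩
  have hdep : a - t • b ∈ K ∙ (a * a) :=
    mem_span_singleton_of_mul_eq_zero_of_nondegenerate hgen φ hφ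
      (AtRel.mul_self_mul_eq_zero e ha hb) (fun g hg => (hsocle g hg).1)
      (AtRel.mul_self_ne_zero e ha hb ht)
  exact hnotMem (Submodule.span_mono (by simp) hdep)

/-- If `char k ≠ 2` and `t² = 1`, then in `A_t` the element `α - tβ` annihilates the ideal
`J = (α, β)` on both sides (so lies in the socle) while not lying in
`J² = span{α², αβ, βα, β²}`; consequently `A_t` is not a symmetric algebra. -/
theorem stmt_4 (K : Type*) [Field K] (hchar : (2 : K) ≠ 0) (t : K) (ht : t ^ 2 = 1)
    (A : Type*) [Ring A] [Algebra K A] (e : RingQuot (AtRel K t) ≃ₐ[K] A)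
    (a b : A) (ha : a = e (RingQuot.mkAlgHom K (AtRel K t) (FreeAlgebra.ι K 0)))
    (hb : b = e (RingQuot.mkAlgHom K (AtRel K t) (FreeAlgebra.ι K 1))) :
    (∀ x ∈ TwoSidedIdeal.span ({a, b} : Set A), (a - t • b) * x = 0 ∧ x * (a - t • b) = 0) ∧
    (a - t • b) ∉ Submodule.span K ({a * a, a * b, b * a, b * b} : Set A) ∧
    ¬ ∃ φ : A →ₗ[K] K, (∀ x y : A, φ (x * y) = φ (y * x)) ∧
        (∀ x : A, x ≠ 0 → ∃ y, φ (x * y) ≠ 0) :=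
  stmt_4_general K t ht A e a b ha hb
end

section
/- The quotient algebra k[x₁,…,x_r]/⟨x_i^{m_i} (all i), x_i x_j (i ≠ j)⟩ determines the multiset {m_1,…,m_r} of exponents with m_i ≥ 2: if two such algebras k[x₁,…,x_r]/⟨x_i^{m_i}, x_i x_j⟩ and k[y₁,…,y_s]/⟨y_j^{n_j}, y_i y_j⟩ with all m_i, n_j ≥ 2 are isomorphic as k-algebras, then r = s and the multisets {m_i} and {n_j} coincide. -/
/-!
The nilradical `𝔪` of `A = k[x₁,…,x_r]/I` is the image of `(x₁,…,x_r)`, and an isomorphism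
of `k`-algebras carries nilradical to nilradical, so the dimensions `dim_k A/𝔪^(t+1)` are
invariants of `A`. As `I + (x₁,…,x_r)^(t+1)` is a monomial ideal, `A/𝔪^(t+1)` has the basis of
standard monomials `1` and `x_i^u` with `1 ≤ u ≤ min (m_i - 1) t`, so
`dim_k A/𝔪^(t+1) = 1 + ∑ i, min (m_i - 1) t`. The increments in `t` of this function count
the `m_i - 1` exceeding `t`, which recovers the multiset of the positive numbers `m_i - 1`.
-/

open MvPolynomial

/-- The ideal of `k[x₁,…,x_r]` generated by `x_i^{m_i}` (all `i`) and `x_i x_j` (`i ≠ j`). -/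
noncomputable def monIdeal (k : Type*) [Field k] (r : ℕ) (m : Fin r → ℕ) :
    Ideal (MvPolynomial (Fin r) k) :=
  Ideal.span ({p | ∃ i, p = X i ^ m i} ∪ {p | ∃ i j, i ≠ j ∧ p = X i * X j})

namespace MvPolynomial

variable {σ R : Type*}

lemma ker_constantCoeff [CommSemiring R] :
    RingHom.ker (constantCoeff : MvPolynomial σ R →+* R) = idealOfVars σ R := by
  ext p
  rw [RingHom.mem_ker, ← pow_one (idealOfVars σ R), mem_pow_idealOfVars_iff, constantCoeff_eq]
  simp [Nat.one_le_iff_ne_zero, Finsupp.degree_eq_zero_iff, not_imp_not]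

instance isPrime_idealOfVars [CommRing R] [IsDomain R] : (idealOfVars σ R).IsPrime :=
  ker_constantCoeff (σ := σ) (R := R) ▸ RingHom.ker_isPrime _

lemma isCompl_restrictSupport_compl [CommSemiring R] (s : Set (σ →₀ ℕ)) :
    IsCompl (restrictSupport R s) (restrictSupport R sᶜ) := by
  have h : IsCompl (Finsupp.supported R R s) (Finsupp.supported R R sᶜ) :=
    ⟨Finsupp.disjoint_supported_supported isCompl_compl.disjoint,
      Finsupp.codisjoint_supported_supported isCompl_compl.codisjoint⟩
  simpa [restrictSupport, AddMonoidAlgebra.supported, Submodule.comap_equiv_eq_map_symm] using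
    (Submodule.orderIsoMapComap (AddMonoidAlgebra.coeffLinearEquiv R).symm).isCompl h

lemma restrictScalars_span_monomial [CommSemiring R] (S : Set (σ →₀ ℕ)) :
    (Ideal.span ((monomial · (1 : R)) '' S)).restrictScalars R =
      restrictSupport R (upperClosure S) := by
  ext p
  simp [mem_ideal_span_monomial_image, mem_restrictSupport_iff, Set.subset_def]

lemma finrank_quotient_span_monomial {k : Type*} [Field k] (S : Set (σ →₀ ℕ)) :
    Module.finrank k (MvPolynomial σ k ⧸ Ideal.span ((monomial · (1 : k)) '' S)) =
      Nat.card ↥(upperClosure S : Set (σ →₀ ℕ))ᶜ := by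
  let e := (Submodule.Quotient.restrictScalarsEquiv k _).symm.trans <|
    (Submodule.quotEquivOfEq _ _ (restrictScalars_span_monomial S)).trans <|
      Submodule.quotientEquivOfIsCompl _ _ (isCompl_restrictSupport_compl _)
  rw [e.finrank_eq, Module.finrank_eq_nat_card_basis (basisRestrictSupport k _)]

end MvPolynomial

namespace Finsupp

variable {σ : Type*}

-- Both sides say `monomial d 1 ∈ idealOfVars σ ℚ ^ n`, by the two descriptions of that ideal.
lemma exists_degree_eq_le_iff {d : σ →₀ ℕ} {n : ℕ} :
    (∃ s ∈ degree ⁻¹' {n}, s ≤ d) ↔ n ≤ degree d := by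
  have := monomial_mem_pow_idealOfVars_iff (R := ℚ) n d one_ne_zero
  rw [pow_idealOfVars_eq_span, mem_ideal_span_monomial_image, support_monomial,
    if_neg one_ne_zero] at this
  simpa using this

lemma single_add_single_le_iff {i j : σ} (hij : i ≠ j) (d : σ →₀ ℕ) :
    single i 1 + single j 1 ≤ d ↔ 1 ≤ d i ∧ 1 ≤ d j := by
  refine ⟨fun h => ⟨?_, ?_⟩, fun ⟨hi, hj⟩ l => ?_⟩
  · simpa [hij.symm] using h i
  · simpa [hij] using h j
  · by_cases hli : l = i <;> by_cases hlj : l = j <;> simp_all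

end Finsupp

namespace Multiset

lemma sum_map_min_succ (M : Multiset ℕ) (t : ℕ) :
    (M.map (min · (t + 1))).sum = (M.map (min · t)).sum + M.countP (t < ·) := by
  induction M using Multiset.induction_on with
  | empty => simp
  | cons a M ih =>
    simp only [map_cons, sum_cons, countP_cons, ih]
    split_ifs <;> omega

lemma countP_lt_eq_count_succ_add (M : Multiset ℕ) (t : ℕ) :
    M.countP (t < ·) = M.count (t + 1) + M.countP (t + 1 < ·) := by
  induction M using Multiset.induction_on with
  | empty => simp
  | cons a M ih =>
    simp only [countP_cons, count_cons, ih]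
    split_ifs <;> omega

lemma eq_of_sum_map_min_eq {M N : Multiset ℕ} (hM : 0 ∉ M) (hN : 0 ∉ N)
    (h : ∀ t, (M.map (min · t)).sum = (N.map (min · t)).sum) : M = N := by
  have hcountP (t : ℕ) : M.countP (t < ·) = N.countP (t < ·) := by
    have := h (t + 1)
    rw [sum_map_min_succ, sum_map_min_succ, h t] at this
    omega
  ext a
  rcases a with _ | t
  · rw [count_eq_zero.mpr hM, count_eq_zero.mpr hN]
  · have hM' := countP_lt_eq_count_succ_add M t
    have hN' := countP_lt_eq_count_succ_add N t
    have := hcountP t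
    have := hcountP (t + 1)
    omega

lemma eq_of_sum_map_min_pred_eq {M N : Multiset ℕ}
    (hM : ∀ x ∈ M, 2 ≤ x) (hN : ∀ x ∈ N, 2 ≤ x)
    (h : ∀ t, (M.map fun x => min (x - 1) t).sum = (N.map fun x => min (x - 1) t).sum) :
    M = N := by
  have zero_notMem_pred (L : Multiset ℕ) (hL : ∀ x ∈ L, 2 ≤ x) : 0 ∉ L.map (· - 1) := by
    simp only [mem_map, not_exists, not_and]
    intro x hx
    have := hL x hx
    omega
  have map_succ_pred (L : Multiset ℕ) (hL : ∀ x ∈ L, 2 ≤ x) :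
      (L.map (· - 1)).map (· + 1) = L := by
    rw [map_map]
    conv_rhs => rw [← map_id L]
    exact map_congr rfl fun x hx => by have := hL x hx; simp only [Function.comp_apply, id]; omega
  have hpred : M.map (· - 1) = N.map (· - 1) :=
    eq_of_sum_map_min_eq (zero_notMem_pred M hM) (zero_notMem_pred N hN)
      (by simpa only [map_map, Function.comp_def] using h)
  rw [← map_succ_pred M hM, hpred, map_succ_pred N hN]

end Multiset

lemma RingEquiv.map_nilradical {A B : Type*} [CommRing A] [CommRing B] (e : A ≃+* B) :
    (nilradical A).map (e : A →+* B) = nilradical B := by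
  rw [nilradical, nilradical, Ideal.zero_eq_bot, Ideal.zero_eq_bot,
    Ideal.map_radical_of_surjective e.surjective (by simp), Ideal.map_bot]

lemma AlgEquiv.finrank_quotient_nilradical_pow_eq {k A B : Type*} [CommRing k] [CommRing A]
    [CommRing B] [Algebra k A] [Algebra k B] (e : A ≃ₐ[k] B) (t : ℕ) :
    Module.finrank k (A ⧸ nilradical A ^ t) = Module.finrank k (B ⧸ nilradical B ^ t) := by
  have h : nilradical B ^ t = (nilradical A ^ t).map (e : A →+* B) := by
    rw [Ideal.map_pow, ← e.toRingEquiv.map_nilradical]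
    rfl
  exact (Ideal.quotientEquivAlg _ _ e h).toLinearEquiv.finrank_eq

section monIdeal

open Finsupp Finset

variable {k : Type*} [Field k] {r : ℕ}

def monIdealExponents (m : Fin r → ℕ) : Set (Fin r →₀ ℕ) :=
  Set.range (fun i => single i (m i)) ∪ {d | ∃ i j, i ≠ j ∧ d = single i 1 + single j 1}

lemma monIdeal_eq_span_monomial (m : Fin r → ℕ) :
    monIdeal k r m = Ideal.span ((monomial · 1) '' monIdealExponents m) := by
  simp only [monIdeal, monIdealExponents, Set.image_union, ← Set.range_comp]
  congr 2
  · ext p; simp [X_pow_eq_monomial, eq_comm]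
  · ext p; simp [X, monomial_mul, eq_comm]

lemma mem_upperClosure_monIdealExponents_union (m : Fin r → ℕ) (t : ℕ)
    (d : Fin r →₀ ℕ) :
    d ∈ upperClosure (monIdealExponents m ∪ degree ⁻¹' {t + 1}) ↔
      (∃ i, m i ≤ d i) ∨ (∃ i j, i ≠ j ∧ 1 ≤ d i ∧ 1 ≤ d j) ∨
        t + 1 ≤ degree d := by
  rw [mem_upperClosure, ← exists_degree_eq_le_iff]
  simp only [monIdealExponents, Set.mem_union, or_and_right, exists_or, or_assoc]
  refine or_congr (by simp [single_le_iff]) (or_congr ⟨?_, ?_⟩ Iff.rfl)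
  · rintro ⟨_, ⟨i, j, hij, rfl⟩, h⟩
    exact ⟨i, j, hij, (single_add_single_le_iff hij d).mp h⟩
  · rintro ⟨i, j, hij, h⟩
    exact ⟨_, ⟨i, j, hij, rfl⟩, (single_add_single_le_iff hij d).mpr h⟩

noncomputable def standardExponents (m : Fin r → ℕ) (t : ℕ) : Finset (Fin r →₀ ℕ) :=
  insert 0 (univ.biUnion fun i => (Icc 1 (min (m i - 1) t)).image (single i))

lemma card_standardExponents (m : Fin r → ℕ) (t : ℕ) :
    #(standardExponents m t) = ∑ i, min (m i - 1) t + 1 := by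
  rw [standardExponents, card_insert_of_notMem, card_biUnion]
  · simp [card_image_of_injective _ (single_injective _)]
  · intro i _ j _ hij
    simp only [Function.onFun, disjoint_left, mem_image, mem_Icc]
    rintro _ ⟨u, ⟨hu, -⟩, rfl⟩ ⟨v, ⟨hv, -⟩, h⟩
    exact hij (single_eq_single_iff .. |>.mp h |>.resolve_right (by omega)).1.symm
  · simp only [mem_biUnion, mem_image, mem_Icc, not_exists, not_and]
    rintro i - u ⟨hu, -⟩ h
    exact (single_ne_zero.mpr (by omega : u ≠ 0)) h

lemma coe_standardExponents {m : Fin r → ℕ} (hm : ∀ i, 1 ≤ m i) (t : ℕ) :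
    (standardExponents m t : Set (Fin r →₀ ℕ)) =
      (upperClosure (monIdealExponents m ∪ degree ⁻¹' {t + 1}) :
        Set (Fin r →₀ ℕ))ᶜ := by
  ext d
  simp only [Set.mem_compl_iff, SetLike.mem_coe]
  rw [mem_upperClosure_monIdealExponents_union, standardExponents, mem_insert, mem_biUnion]
  push Not
  constructor
  · rintro (rfl | ⟨i, -, hd⟩)
    · exact ⟨fun i => hm i, by simp, by simp⟩
    obtain ⟨u, hu, rfl⟩ := mem_image.mp hd
    rw [mem_Icc] at hu
    refine ⟨fun j => ?_, fun j l hjl hj => ?_, by rw [degree_single]; omega⟩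
    · rcases eq_or_ne i j with rfl | hij
      · rw [single_eq_same]; omega
      · rw [single_eq_of_ne' hij]; exact hm j
    · rcases eq_or_ne i l with rfl | hil
      · rw [single_eq_of_ne' hjl.symm] at hj; omega
      · rw [single_eq_of_ne' hil]; omega
  · rintro ⟨hlt, hpair, hdeg⟩
    obtain rfl | ⟨i, hi⟩ := eq_or_ne d 0 |>.imp_right (Finsupp.support_nonempty_iff.mpr)
    · exact Or.inl rfl
    have hd : d = single i (d i) := by
      ext j
      rcases eq_or_ne i j with rfl | hij
      · rw [single_eq_same]
      · rw [single_eq_of_ne' hij]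
        have := hpair i j hij (Nat.one_le_iff_ne_zero.mpr (mem_support_iff.mp hi))
        omega
    refine Or.inr ⟨i, mem_univ i, mem_image.mpr ⟨d i, mem_Icc.mpr ⟨?_, ?_⟩, hd.symm⟩⟩
    · exact Nat.one_le_iff_ne_zero.mpr (mem_support_iff.mp hi)
    · have := hlt i
      rw [hd, degree_single] at hdeg
      omega

lemma finrank_quotient_monIdeal_sup_pow {m : Fin r → ℕ} (hm : ∀ i, 1 ≤ m i) (t : ℕ) :
    Module.finrank k
        (MvPolynomial (Fin r) k ⧸ monIdeal k r m ⊔ idealOfVars (Fin r) k ^ (t + 1)) =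
      ∑ i, min (m i - 1) t + 1 := by
  rw [monIdeal_eq_span_monomial, pow_idealOfVars_eq_span, ← Ideal.span_union, ← Set.image_union,
    finrank_quotient_span_monomial, ← coe_standardExponents hm, Nat.card_coe_set_eq,
    Set.ncard_coe_finset, card_standardExponents]

lemma monIdeal_le_idealOfVars {m : Fin r → ℕ} (hm : ∀ i, 1 ≤ m i) :
    monIdeal k r m ≤ idealOfVars (Fin r) k := by
  rw [monIdeal, Ideal.span_le]
  rintro p (⟨i, rfl⟩ | ⟨i, j, -, rfl⟩)
  · exact Ideal.pow_mem_of_mem _ (Ideal.subset_span (Set.mem_range_self i)) _ (hm i)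
  · exact Ideal.mul_mem_left _ _ (Ideal.subset_span (Set.mem_range_self j))

lemma nilradical_quotient_monIdeal {m : Fin r → ℕ} (hm : ∀ i, 1 ≤ m i) :
    nilradical (MvPolynomial (Fin r) k ⧸ monIdeal k r m) =
      (idealOfVars (Fin r) k).map (Ideal.Quotient.mk _) := by
  refine le_antisymm ?_ ?_
  · have := Ideal.map_isPrime_of_surjective (Ideal.Quotient.mk_surjective (I := monIdeal k r m))
      (I := idealOfVars (Fin r) k) (by rw [Ideal.mk_ker]; exact monIdeal_le_idealOfVars hm)
    exact nilradical_le_prime _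
  · rw [Ideal.map_span, Ideal.span_le]
    rintro _ ⟨_, ⟨i, rfl⟩, rfl⟩
    refine mem_nilradical.mpr ⟨m i, ?_⟩
    rw [← map_pow, Ideal.Quotient.eq_zero_iff_mem]
    exact Ideal.subset_span (Or.inl ⟨i, rfl⟩)

lemma finrank_quotient_nilradical_pow {m : Fin r → ℕ} (hm : ∀ i, 1 ≤ m i) (t : ℕ) :
    Module.finrank k ((MvPolynomial (Fin r) k ⧸ monIdeal k r m) ⧸
        nilradical (MvPolynomial (Fin r) k ⧸ monIdeal k r m) ^ (t + 1)) =
      ∑ i, min (m i - 1) t + 1 := by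
  rw [nilradical_quotient_monIdeal hm, ← Ideal.map_pow,
    ← finrank_quotient_monIdeal_sup_pow (k := k) hm]
  exact (DoubleQuot.quotQuotEquivQuotSupₐ k _ _).toLinearEquiv.finrank_eq

end monIdeal

/-- The algebra `k[x₁,…,x_r]/⟨x_i^{m_i}, x_i x_j (i ≠ j)⟩` with all `m_i ≥ 2` determines the
multiset of exponents: if two such algebras are isomorphic, then `r = s` and the multisets
of exponents coincide. -/
theorem stmt_7 (k : Type*) [Field k] (r s : ℕ) (m : Fin r → ℕ) (n : Fin s → ℕ)
    (hm : ∀ i, 2 ≤ m i) (hn : ∀ j, 2 ≤ n j)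
    (h : Nonempty ((MvPolynomial (Fin r) k ⧸ monIdeal k r m) ≃ₐ[k]
        (MvPolynomial (Fin s) k ⧸ monIdeal k s n))) :
    r = s ∧ Finset.univ.val.map m = Finset.univ.val.map n := by
  obtain ⟨e⟩ := h
  have hdim (t : ℕ) : ∑ i, min (m i - 1) t = ∑ j, min (n j - 1) t := by
    have := e.finrank_quotient_nilradical_pow_eq (t + 1)
    rwa [finrank_quotient_nilradical_pow (fun i => (hm i).trans' one_le_two),
      finrank_quotient_nilradical_pow (fun j => (hn j).trans' one_le_two), add_left_inj] at this
  have hmult : Finset.univ.val.map m = Finset.univ.val.map n :=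
    Multiset.eq_of_sum_map_min_pred_eq (by simpa using hm) (by simpa using hn)
      (by simpa only [Multiset.map_map, Function.comp_def, Finset.sum_map_val] using hdim)
  exact ⟨by simpa using congrArg Multiset.card hmult, hmult⟩
end

section
/- Let k be an algebraically closed field. The subgroup T_Γ of (k*)^{n+1} cut out by equations ∏_{i∈C} k_i^{m_C} = u (for blocks C of a partition of {1,…,n}) and k_j² = t_j · u for j in a distinguished subset L disjoint from a chosen transversal (with fixed t_j ∈ k*), admits a surjective homomorphism onto (k*)^{n - c - |L| + 1} with finite kernel, where c is the number of blocks. -/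
open Function

/-- Partition `{1,…,n}` into `c` blocks via a surjection `B : Fin n → Fin c` with
multiplicities `m : Fin c → ℕ+`; fix a subset `L` such that every block contains an element
outside `L`, and scalars `t_j ∈ kˣ` for `j ∈ L`.  The subgroup `T_Γ ⊆ (kˣ)ⁿ × kˣ` cut out by
`∏_{B i = b} k_i^{m b} = u` (for every block `b`) and `k_j² = t_j u` (for every `j ∈ L`)
admits a surjective homomorphism onto `(kˣ)^{n - c - |L| + 1}` with finite kernel. -/
theorem stmt_14 (k : Type*) [Field k] [IsAlgClosed k] (n c : ℕ)
    (B : Fin n → Fin c) (m : Fin c → ℕ+) (L : Finset (Fin n)) (t : Fin n → kˣ)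
    (hBL : ∀ b : Fin c, ∃ i, B i = b ∧ i ∉ L)
    (T : Subgroup ((Fin n → kˣ) × kˣ))
    (hT : ∀ p : (Fin n → kˣ) × kˣ, p ∈ T ↔
      (∀ b : Fin c, ∏ i ∈ Finset.univ.filter (fun i => B i = b), p.1 i ^ (m b : ℕ) = p.2) ∧
      (∀ j ∈ L, p.1 j ^ 2 = t j * p.2)) :
    ∃ φ : T →* (Fin (n - c - L.card + 1) → kˣ), Surjective φ ∧ Finite φ.ker := by
  classical
  -- `t` is identically 1 on `L` (from `1 ∈ T`).
  have ht1 : ∀ j ∈ L, t j = 1 := by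
    intro j hj
    have h1 := ((hT 1).mp T.one_mem).2 j hj
    simpa using h1.symm
  -- roots exist in `kˣ`.
  have hroot : ∀ (a : kˣ) (N : ℕ), 0 < N → ∃ x : kˣ, x ^ N = a := by
    intro a N hN
    obtain ⟨z, hz⟩ := IsAlgClosed.exists_pow_nat_eq (a : k) hN
    have hz0 : z ≠ 0 := by
      intro h
      rw [h, zero_pow hN.ne'] at hz
      exact a.ne_zero hz.symm
    exact ⟨Units.mk0 z hz0, Units.ext (by simpa using hz)⟩
  -- transversal
  choose r hr hrL using hBL
  have hrinj : Function.Injective r := fun a b h => by rw [← hr a, ← hr b, h]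
  set S : Finset (Fin n) := L ∪ Finset.image r Finset.univ with hSdef
  have hdisj : Disjoint L (Finset.image r Finset.univ) := by
    rw [Finset.disjoint_right]
    intro i hi
    simp only [Finset.mem_image, Finset.mem_univ, true_and] at hi
    obtain ⟨b, rfl⟩ := hi
    exact hrL b
  have hScard : S.card = L.card + c := by
    rw [hSdef, Finset.card_union_of_disjoint hdisj,
      Finset.card_image_of_injective _ hrinj, Finset.card_univ, Fintype.card_fin]
  have hcard : Sᶜ.card = n - c - L.card := by
    rw [Finset.card_compl, hScard, Fintype.card_fin]
    omega
  set d := n - c - L.card with hd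
  set e : ↥Sᶜ ≃ Fin d := Finset.equivFinOfCardEq hcard with he
  set coords : Fin d → Fin n := fun i => ((e.symm i : ↥Sᶜ) : Fin n) with hcoords
  have hcoords_mem : ∀ i, coords i ∈ Sᶜ := fun i => (e.symm i).2
  -- basic membership facts
  have hmem_trich : ∀ i : Fin n, i ∈ L ∨ (∃ b, r b = i) ∨ i ∈ Sᶜ := by
    intro i
    by_cases h : i ∈ Sᶜ
    · exact Or.inr (Or.inr h)
    · rw [Finset.mem_compl, not_not, hSdef, Finset.mem_union] at h
      rcases h with h | h
      · exact Or.inl h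
      · simp only [Finset.mem_image, Finset.mem_univ, true_and] at h
        exact Or.inr (Or.inl h)
  have hL_not_compl : ∀ j ∈ L, j ∉ Sᶜ := by
    intro j hj
    rw [Finset.mem_compl, not_not, hSdef]
    exact Finset.mem_union_left _ hj
  have hr_not_compl : ∀ b, r b ∉ Sᶜ := by
    intro b
    rw [Finset.mem_compl, not_not, hSdef]
    exact Finset.mem_union_right _ (Finset.mem_image_of_mem r (Finset.mem_univ b))
  have hL_not_img : ∀ j ∈ L, j ∉ Finset.image r Finset.univ :=
    fun j hj => Finset.disjoint_left.mp hdisj hj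
  -- the projection homomorphism on the ambient group
  set Φ : ((Fin n → kˣ) × kˣ) →* (Fin (d + 1) → kˣ) :=
    { toFun := fun p => Fin.snoc (fun i => p.1 (coords i)) p.2
      map_one' := by
        funext i
        refine Fin.lastCases ?_ (fun j => ?_) i
        · simp
        · simp
      map_mul' := by
        intro p q
        funext i
        refine Fin.lastCases ?_ (fun j => ?_) i
        · simp
        · simp } with hPhi
  refine ⟨Φ.comp T.subtype, ?_, ?_⟩
  · -- Surjectivity
    intro v
    set u := v (Fin.last d) with hu
    obtain ⟨s, hs⟩ := hroot u 2 two_pos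
    set base : Fin n → kˣ := fun i =>
      if h : i ∈ Sᶜ then v (Fin.castSucc (e ⟨i, h⟩)) else s with hbase
    choose w hw using fun b =>
      hroot (u * (∏ i ∈ (Finset.univ.filter (fun i => B i = b)).erase (r b),
        base i ^ (m b : ℕ))⁻¹) (m b) (m b).pos
    set kk : Fin n → kˣ := fun i =>
      if i ∈ Finset.image r Finset.univ then w (B i) else base i with hkk
    have hkk_r : ∀ b, kk (r b) = w b := by
      intro b
      rw [hkk]
      simp only [Finset.mem_image_of_mem r (Finset.mem_univ b), if_true, hr]
    have hkk_not : ∀ i, (∀ b, r b ≠ i) → kk i = base i := by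
      intro i hi
      have h : i ∉ Finset.image r Finset.univ := by
        simp only [Finset.mem_image, Finset.mem_univ, true_and]
        exact fun ⟨b, hb⟩ => hi b hb
      simp only [hkk, if_neg h]
    have hmemT : (kk, u) ∈ T := by
      rw [hT]
      constructor
      · intro b
        show (∏ i ∈ Finset.univ.filter (fun i => B i = b), kk i ^ (m b : ℕ)) = u
        have hrb : r b ∈ Finset.univ.filter (fun i => B i = b) := by
          simp [hr]
        rw [← Finset.mul_prod_erase _ _ hrb]
        have hrest : ∀ i ∈ (Finset.univ.filter (fun i => B i = b)).erase (r b),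
            kk i = base i := by
          intro i hi
          rw [Finset.mem_erase, Finset.mem_filter] at hi
          refine hkk_not i fun b' hb' => ?_
          have : b' = b := by rw [← hi.2.2, ← hb', hr]
          exact hi.1 (by rw [← hb', this])
        rw [Finset.prod_congr rfl (fun i hi => by rw [hrest i hi])]
        simp only [hkk_r, hw]
        rw [mul_assoc, inv_mul_cancel, mul_one]
      · intro j hj
        show kk j ^ 2 = t j * u
        have hkj : kk j = base j := by
          refine hkk_not j fun b hb => ?_
          exact hL_not_img j hj (hb ▸ Finset.mem_image_of_mem r (Finset.mem_univ b))
        rw [hkj]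
        simp only [hbase, dif_neg (hL_not_compl j hj)]
        rw [ht1 j hj, one_mul, hs]
    refine ⟨⟨(kk, u), hmemT⟩, ?_⟩
    funext i
    refine Fin.lastCases ?_ (fun j => ?_) i
    · show (Fin.snoc (fun i => kk (coords i)) u : Fin (d+1) → kˣ) (Fin.last d) = v (Fin.last d)
      rw [Fin.snoc_last]
    · show (Fin.snoc (fun i => kk (coords i)) u : Fin (d+1) → kˣ) (Fin.castSucc j) = v (Fin.castSucc j)
      rw [Fin.snoc_castSucc]
      have h1 : kk (coords j) = base (coords j) := by
        refine hkk_not _ fun b hb => hr_not_compl b (hb ▸ hcoords_mem j)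
      have h2 : coords j ∈ Sᶜ := hcoords_mem j
      rw [h1]
      simp only [hbase, dif_pos h2]
      congr 1
      have h3 : (⟨coords j, h2⟩ : ↥Sᶜ) = e.symm j := Subtype.ext rfl
      rw [h3, Equiv.apply_symm_apply]
  · -- Finite kernel
    set N := 2 * ∏ b, (m b : ℕ) with hN
    have hNpos : 0 < N := by
      rw [hN]
      exact Nat.mul_pos two_pos (Finset.prod_pos fun b _ => (m b).pos)
    have hkerN : ∀ p : (Fin n → kˣ) × kˣ, p ∈ T → Φ p = 1 →
        (∀ i, p.1 i ^ N = 1) ∧ p.2 ^ N = 1 := by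
      intro p hpT hp1
      have h2 : p.2 = 1 := by
        have := congrFun hp1 (Fin.last d)
        simp only [hPhi, MonoidHom.coe_mk, OneHom.coe_mk, Fin.snoc_last, Pi.one_apply] at this
        exact this
      have hSc : ∀ i ∈ Sᶜ, p.1 i = 1 := by
        intro i hi
        have := congrFun hp1 (Fin.castSucc (e ⟨i, hi⟩))
        simp only [hPhi, MonoidHom.coe_mk, OneHom.coe_mk, Fin.snoc_castSucc, Pi.one_apply,
          hcoords, Equiv.symm_apply_apply] at this
        exact this
      obtain ⟨hblk, hLeq⟩ := (hT p).mp hpT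
      have hL2 : ∀ j ∈ L, p.1 j ^ 2 = 1 := by
        intro j hj
        rw [hLeq j hj, ht1 j hj, h2, one_mul]
      have hrb2 : ∀ b, p.1 (r b) ^ (2 * (m b : ℕ)) = 1 := by
        intro b
        have hb := hblk b
        rw [h2] at hb
        have hrb : r b ∈ Finset.univ.filter (fun i => B i = b) := by simp [hr]
        rw [← Finset.mul_prod_erase _ _ hrb] at hb
        have hb2 := congrArg (· ^ 2) hb
        simp only [mul_pow, one_pow] at hb2
        have hrest : ∀ i ∈ (Finset.univ.filter (fun i => B i = b)).erase (r b),
            (p.1 i ^ (m b : ℕ)) ^ 2 = 1 := by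
          intro i hi
          rw [Finset.mem_erase, Finset.mem_filter] at hi
          have hisq : p.1 i ^ 2 = 1 := by
            rcases hmem_trich i with h | ⟨b', hb'⟩ | h
            · exact hL2 i h
            · exfalso
              have : b' = b := by rw [← hi.2.2, ← hb', hr]
              exact hi.1 (by rw [← hb', this])
            · rw [hSc i h, one_pow]
          rw [← pow_mul, mul_comm (m b : ℕ) 2, pow_mul, hisq, one_pow]
        rw [← Finset.prod_pow, Finset.prod_congr rfl hrest, Finset.prod_const_one,
          mul_one] at hb2
        rwa [← pow_mul, mul_comm (m b : ℕ) 2] at hb2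
      refine ⟨fun i => ?_, by rw [h2, one_pow]⟩
      rcases hmem_trich i with h | ⟨b, hb⟩ | h
      · obtain ⟨q, hq⟩ : 2 ∣ N := ⟨∏ b, (m b : ℕ), hN⟩
        rw [hq, pow_mul, hL2 i h, one_pow]
      · obtain ⟨q, hq⟩ : 2 * (m b : ℕ) ∣ N := by
          rw [hN]
          exact mul_dvd_mul_left 2 (Finset.dvd_prod_of_mem _ (Finset.mem_univ b))
        rw [hq, pow_mul, ← hb, hrb2 b, one_pow]
      · rw [hSc i h, one_pow]
    have : NeZero N := ⟨hNpos.ne'⟩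
    set f : (Φ.comp T.subtype).ker → (Fin n → rootsOfUnity N k) × rootsOfUnity N k :=
      fun p =>
        (fun i => ⟨(p : T).1.1 i, (mem_rootsOfUnity _ _).mpr
            ((hkerN (p : T).1 (p : T).2 p.2).1 i)⟩,
         ⟨(p : T).1.2, (mem_rootsOfUnity _ _).mpr ((hkerN (p : T).1 (p : T).2 p.2).2)⟩)
    have hfinj : Function.Injective f := by
      intro p q hpq
      have h1 : ∀ i, (p : T).1.1 i = (q : T).1.1 i := by
        intro i
        have := congrFun (congrArg Prod.fst hpq) i
        exact Subtype.ext_iff.mp this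
      have h2 : (p : T).1.2 = (q : T).1.2 := Subtype.ext_iff.mp (congrArg Prod.snd hpq)
      ext : 3
      · exact funext h1
      · exact h2
    exact Finite.of_injective f hfinj
end
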